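/- arXiv:2307.02271 — 5 statements merged into one kernel-verified Lean document; each statement's English description precedes it below -/
import Mathlib

section
/- Let λ be a complex number with |λ| = 1. A nonzero bounded linear operator X on the Hardy space H²(𝔻) satisfies BX = λXB (i.e., X is an extended λ-eigenoperator of the backward shift B) if and only if X = R_λ φ(B) for some φ ∈ H^∞(𝔻), where R_λ is the dilation operator and φ(B) is the element of the commutant of B with symbol φ. -/
open Complex Metric Filter Topology ComplexConjugate

noncomputable section

/-- The Hardy space `H²(𝔻)`, modeled via Taylor coefficients as the sequence space `ℓ²`:
an analytic function `f(z) = Σ aₙ zⁿ` on the unit disk with `Σ |aₙ|² < ∞` is identified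
with its coefficient sequence. -/
abbrev H2 := lp (fun _ : ℕ => ℂ) 2

/-- The analytic function on the unit disk represented by an element of `H²`. -/
def H2.toFun (f : H2) (z : ℂ) : ℂ := ∑' n : ℕ, f n * z ^ n

/-- `B` is the backward shift `(Bf)(z) = (f(z) - f(0))/z`, i.e. on Taylor coefficients
`(Bf)ₙ = f_{n+1}`. -/
def IsBackwardShift (B : H2 →L[ℂ] H2) : Prop :=
  ∀ (f : H2) (n : ℕ), B f n = f (n + 1)

/-- `R` is the dilation operator `(R_λ f)(z) = f(λ z)`, i.e. on Taylor coefficients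
`(R_λ f)ₙ = λⁿ fₙ`. -/
def IsDilation (lam : ℂ) (R : H2 →L[ℂ] H2) : Prop :=
  ∀ (f : H2) (n : ℕ), R f n = lam ^ n * f n

/-- `φ ∈ H^∞(𝔻)`: a bounded analytic function on the open unit disk. -/
def InHinf (φ : ℂ → ℂ) : Prop :=
  DifferentiableOn ℂ φ (ball (0:ℂ) 1) ∧ ∃ M : ℝ, ∀ z ∈ ball (0:ℂ) 1, ‖φ z‖ ≤ M

/-- `Φ = φ(B)`, the coanalytic Toeplitz operator `M_{φ̄}⋆` with symbol `φ`: there is a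
Taylor coefficient sequence `c` for `φ` on the disk such that
`(Φ f)ₙ = Σ_k c_k f_{n+k}` (equivalently `Φ = Σ_k c_k B^k`). -/
def IsCoToeplitz (φ : ℂ → ℂ) (Φ : H2 →L[ℂ] H2) : Prop :=
  ∃ c : ℕ → ℂ,
    (∀ z ∈ ball (0:ℂ) 1, HasSum (fun k => c k * z ^ k) (φ z)) ∧
    (∀ (f : H2) (n : ℕ), HasSum (fun k => c k * f (n + k)) (Φ f n))

/-- An operator `T` is hypercyclic if some vector has dense orbit `{Tⁿ x : n ∈ ℕ}`. -/
def Hypercyclic (T : H2 →L[ℂ] H2) : Prop :=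
  ∃ x : H2, Dense (Set.range fun n : ℕ => (T ^ n) x)

/-- An operator `T` is supercyclic if for some vector `x` the set of scalar multiples
`{μ Tⁿ x : μ ∈ ℂ, n ∈ ℕ}` is dense. -/
def Supercyclic (T : H2 →L[ℂ] H2) : Prop :=
  ∃ x : H2, Dense {y : H2 | ∃ (μ : ℂ) (n : ℕ), y = μ • (T ^ n) x}

/-- `φ̄(z) = conj (φ (conj z))`. -/
def conjSymb (φ : ℂ → ℂ) (z : ℂ) : ℂ := conj (φ (conj z))

/-- `λ` is an irrational rotation: `|λ| = 1` and `λ` is not a root of unity. -/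
def IsIrrationalRotation (lam : ℂ) : Prop :=
  ‖lam‖ = 1 ∧ ∀ n : ℕ, 0 < n → lam ^ n ≠ 1

/-- `Ψ_n(z) = φ̄(z)·φ̄(αz)⋯φ̄(α^{n-1}z)` where `α = conj λ`. -/
def psiProd (φ : ℂ → ℂ) (lam : ℂ) (n : ℕ) (z : ℂ) : ℂ :=
  ∏ j ∈ Finset.range n, conjSymb φ ((conj lam) ^ j * z)

/-- `Ω_n(z) = φ̄(ωz)·φ̄(ω²z)⋯φ̄(ωⁿz)` where `ω = 1/conj λ`. -/
def omegaProd (φ : ℂ → ℂ) (lam : ℂ) (n : ℕ) (z : ℂ) : ℂ :=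
  ∏ j ∈ Finset.range n, conjSymb φ (((conj lam)⁻¹) ^ (j + 1) * z)

lemma memℓp_geom {a : ℂ} (ha : ‖a‖ < 1) : Memℓp (fun n : ℕ => (conj a) ^ n) 2 := by
  apply memℓp_gen
  have hs : Summable fun n : ℕ => (‖a‖ ^ 2) ^ n :=
    summable_geometric_of_lt_one (by positivity) (by nlinarith [norm_nonneg a])
  refine hs.congr fun n => ?_
  rw [norm_pow]
  simp only [RCLike.norm_conj]
  rw [ENNReal.toReal_ofNat, Real.rpow_two]
  ring

/-- The reproducing kernel `k_a(z) = 1/(1 - conj(a) z) = Σ (conj a)ⁿ zⁿ` of `H²(𝔻)`,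
as an element of `H²` (junk value `0` if `a` is outside the unit disk). -/
def kernelVec (a : ℂ) : H2 :=
  if ha : ‖a‖ < 1 then ⟨fun n => (conj a) ^ n, memℓp_geom ha⟩ else 0

/-- `T` satisfies the Hypercyclicity Criterion for the sequence `(n_k)`. -/
def SatisfiesHCCriterion (T : H2 →L[ℂ] H2) (nk : ℕ → ℕ) : Prop :=
  ∃ (X₀ Y₀ : Set H2) (S : ℕ → H2 → H2),
    Dense X₀ ∧ Dense Y₀ ∧
    (∀ x ∈ X₀, Tendsto (fun k => (T ^ nk k) x) atTop (𝓝 0)) ∧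
    (∀ y ∈ Y₀, Tendsto (fun k => S k y) atTop (𝓝 0)) ∧
    (∀ y ∈ Y₀, Tendsto (fun k => (T ^ nk k) (S k y)) atTop (𝓝 y))

/-- A family `F` of functions is normal at `z₀`: on some open neighborhood of `z₀`,
every (sub)sequence of the family has a locally uniformly convergent subsequence. -/
def NormalAt (F : ℕ → ℂ → ℂ) (z₀ : ℂ) : Prop :=
  ∃ U : Set ℂ, IsOpen U ∧ z₀ ∈ U ∧
    ∀ g : ℕ → ℕ, StrictMono g →
      ∃ (h : ℕ → ℕ) (f : ℂ → ℂ), StrictMono h ∧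
        TendstoLocallyUniformlyOn (fun j => F (g (h j))) f atTop U

/-- The family `{F n : n ≥ 1}` is uniformly bounded on compact subsets of the unit disk. -/
def UnifBddOnCompacts (F : ℕ → ℂ → ℂ) : Prop :=
  ∀ K : Set ℂ, K ⊆ ball (0:ℂ) 1 → IsCompact K →
    ∃ M : ℝ, ∀ n : ℕ, 1 ≤ n → ∀ z ∈ K, ‖F n z‖ ≤ M


/-!
Since `B R_μ = μ R_μ B` and `R_λ` is invertible for `|λ| = 1`, `BX = λXB` says exactly that
`Φ := R_λ⁻¹ X` commutes with `B`. Commuting with `B` means `(Φ f)_{n+1} = (Φ Bf)_n`, which by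
induction gives `(Φ f)_n = Σ_k c_k f_{n+k}` with `c_k = (Φ e_k)_0`. The reproducing kernels are
eigenvectors, `Φ k_{z̄} = φ(z) k_{z̄}` for `φ = Σ c_k z^k`, so `|φ| ≤ ‖Φ‖` on the disk.
-/

lemma summable_mul_pow_of_norm_le {c : ℕ → ℂ} {C : ℝ} (hc : ∀ k, ‖c k‖ ≤ C) {z : ℂ}
    (hz : ‖z‖ < 1) : Summable fun k => c k * z ^ k := by
  refine Summable.of_norm_bounded ((summable_geometric_of_lt_one (norm_nonneg z) hz).mul_left C)
    fun k => ?_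
  rw [norm_mul, norm_pow]
  exact mul_le_mul_of_nonneg_right (hc k) (by positivity)

lemma differentiableOn_tsum_mul_pow_of_norm_le {c : ℕ → ℂ} {C : ℝ} (hc : ∀ k, ‖c k‖ ≤ C) :
    DifferentiableOn ℂ (fun z => ∑' k, c k * z ^ k) (ball 0 1) := by
  set p := FormalMultilinearSeries.ofScalars ℂ c
  have hradius : 1 ≤ p.radius :=
    p.le_radius_of_bound C fun n => by simpa [p, FormalMultilinearSeries.ofScalars_norm] using hc n
  have hball : ball (0 : ℂ) 1 ⊆ eball 0 p.radius := by
    rw [← Metric.eball_ofReal, ENNReal.ofReal_one]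
    exact eball_subset_eball (by simpa using hradius)
  have hsum : p.sum = fun z => ∑' k, c k * z ^ k :=
    FormalMultilinearSeries.ofScalarsSum_eq_tsum c
  rw [← hsum]
  exact (p.hasFPowerSeriesOnBall (zero_lt_one.trans_le hradius)).differentiableOn.mono hball

section Dilation

def dilation (μ : ℂ) (hμ : ‖μ‖ ≤ 1) : H2 →L[ℂ] H2 :=
  lp.mapCLM 2 (fun n => μ ^ n • ContinuousLinearMap.id ℂ ℂ) zero_le_one fun n => by
    simpa [norm_smul] using pow_le_one₀ (norm_nonneg μ) hμ

lemma isDilation_dilation (μ : ℂ) (hμ : ‖μ‖ ≤ 1) : IsDilation μ (dilation μ hμ) :=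
  fun _ _ => rfl

variable {B R R' : H2 →L[ℂ] H2} {μ : ℂ}

lemma IsDilation.backwardShift_comp (hB : IsBackwardShift B) (hR : IsDilation μ R) :
    B ∘L R = μ • (R ∘L B) := by
  ext f n
  change B (R f) n = μ * R (B f) n
  rw [hB, hR, hR, hB, pow_succ]
  ring

lemma IsDilation.comp_inv (hμ : μ ≠ 0) (hR : IsDilation μ R) (hR' : IsDilation μ⁻¹ R') :
    R ∘L R' = ContinuousLinearMap.id ℂ H2 := by
  ext f n
  change R (R' f) n = f n
  rw [hR, hR', ← mul_assoc, ← mul_pow, mul_inv_cancel₀ hμ, one_pow, one_mul]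

end Dilation

section Commutant

variable {B Φ : H2 →L[ℂ] H2}

lemma apply_succ_of_commute (hB : IsBackwardShift B) (hΦ : B ∘L Φ = Φ ∘L B) (f : H2) (n : ℕ) :
    Φ f (n + 1) = Φ (B f) n := by
  rw [← hB, ← ContinuousLinearMap.comp_apply, hΦ, ContinuousLinearMap.comp_apply]

lemma IsCoToeplitz.backwardShift_comp {φ : ℂ → ℂ} (hB : IsBackwardShift B)
    (hΦ : IsCoToeplitz φ Φ) : B ∘L Φ = Φ ∘L B := by
  obtain ⟨c, -, hc⟩ := hΦ
  ext f n
  change B (Φ f) n = Φ (B f) n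
  rw [hB]
  refine (hc f (n + 1)).unique ?_
  convert hc (B f) n using 2 with k
  rw [hB, add_right_comm]

-- `Φ = φ(B)` forces `(Φ f)₀ = Σ cₖ fₖ`, so the coefficients `cₖ` of `φ` are read off at `f = eₖ`.
def symbolCoeff (Φ : H2 →L[ℂ] H2) (k : ℕ) : ℂ := Φ (lp.single 2 k 1) 0

lemma norm_symbolCoeff_le (Φ : H2 →L[ℂ] H2) (k : ℕ) : ‖symbolCoeff Φ k‖ ≤ ‖Φ‖ :=
  calc ‖Φ (lp.single 2 k 1) 0‖ ≤ ‖Φ (lp.single 2 k 1)‖ := lp.norm_apply_le_norm two_ne_zero _ 0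
    _ ≤ ‖Φ‖ * ‖(lp.single 2 k 1 : H2)‖ := Φ.le_opNorm _
    _ = ‖Φ‖ := by rw [lp.norm_single (by norm_num), norm_one, mul_one]

lemma hasSum_symbolCoeff_mul_apply_zero (Φ : H2 →L[ℂ] H2) (f : H2) :
    HasSum (fun k => symbolCoeff Φ k * f k) (Φ f 0) := by
  have hcoeff (k : ℕ) : Φ (lp.single 2 k (f k)) 0 = symbolCoeff Φ k * f k := by
    have hsingle : (lp.single 2 k (f k) : H2) = f k • lp.single 2 k 1 := by
      rw [← lp.single_smul, smul_eq_mul, mul_one]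
    rw [hsingle, map_smul, lp.coeFn_smul, Pi.smul_apply, smul_eq_mul, mul_comm, symbolCoeff]
  have h : HasSum (fun k => Φ (lp.single 2 k (f k)) 0) (Φ f 0) :=
    (lp.hasSum_single ENNReal.ofNat_ne_top f).mapL (lp.evalCLM ℂ (fun _ => ℂ) 2 0 ∘L Φ)
  simpa only [hcoeff] using h

lemma hasSum_symbolCoeff_mul_apply (hB : IsBackwardShift B) (hΦ : B ∘L Φ = Φ ∘L B)
    (f : H2) (n : ℕ) : HasSum (fun k => symbolCoeff Φ k * f (n + k)) (Φ f n) := by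
  induction n generalizing f with
  | zero => simpa using hasSum_symbolCoeff_mul_apply_zero Φ f
  | succ n ih =>
    rw [apply_succ_of_commute hB hΦ]
    convert ih (B f) using 2 with k
    rw [hB, add_right_comm]

def symbol (Φ : H2 →L[ℂ] H2) (z : ℂ) : ℂ := ∑' k, symbolCoeff Φ k * z ^ k

lemma hasSum_symbol (Φ : H2 →L[ℂ] H2) {z : ℂ} (hz : z ∈ ball (0 : ℂ) 1) :
    HasSum (fun k => symbolCoeff Φ k * z ^ k) (symbol Φ z) :=
  (summable_mul_pow_of_norm_le (norm_symbolCoeff_le Φ) (mem_ball_zero_iff.mp hz)).hasSum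

lemma kernelVec_apply {a : ℂ} (ha : ‖a‖ < 1) (n : ℕ) : kernelVec a n = conj a ^ n := by
  simp [kernelVec, ha]

lemma apply_kernelVec (hB : IsBackwardShift B) (hΦ : B ∘L Φ = Φ ∘L B) {z : ℂ}
    (hz : z ∈ ball (0 : ℂ) 1) : Φ (kernelVec (conj z)) = symbol Φ z • kernelVec (conj z) := by
  have hz' : ‖conj z‖ < 1 := by simpa using hz
  ext n
  refine (hasSum_symbolCoeff_mul_apply hB hΦ _ n).unique ?_
  simp only [kernelVec_apply hz', conj_conj, lp.coeFn_smul, Pi.smul_apply, smul_eq_mul, pow_add]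
  simpa [mul_comm, mul_left_comm] using (hasSum_symbol Φ hz).mul_left (z ^ n)

lemma norm_symbol_le (hB : IsBackwardShift B) (hΦ : B ∘L Φ = Φ ∘L B) {z : ℂ}
    (hz : z ∈ ball (0 : ℂ) 1) : ‖symbol Φ z‖ ≤ ‖Φ‖ := by
  have hk : 1 ≤ ‖kernelVec (conj z)‖ := by
    have h0 := lp.norm_apply_le_norm two_ne_zero (kernelVec (conj z)) 0
    rwa [kernelVec_apply (by simpa using hz), pow_zero, norm_one] at h0
  have hle := Φ.le_opNorm (kernelVec (conj z))
  rw [apply_kernelVec hB hΦ hz, norm_smul] at hle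
  exact le_of_mul_le_mul_right hle (zero_lt_one.trans_le hk)

theorem exists_isCoToeplitz_of_commute (hB : IsBackwardShift B) (hΦ : B ∘L Φ = Φ ∘L B) :
    ∃ φ : ℂ → ℂ, InHinf φ ∧ IsCoToeplitz φ Φ :=
  ⟨symbol Φ,
    ⟨differentiableOn_tsum_mul_pow_of_norm_le (norm_symbolCoeff_le Φ),
      ‖Φ‖, fun _ hz => norm_symbol_le hB hΦ hz⟩,
    symbolCoeff Φ, fun _ hz => hasSum_symbol Φ hz, hasSum_symbolCoeff_mul_apply hB hΦ⟩

end Commutant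

theorem stmt0_general (lam : ℂ) (hlam : ‖lam‖ = 1)
    (B R : H2 →L[ℂ] H2) (hB : IsBackwardShift B) (hR : IsDilation lam R)
    (X : H2 →L[ℂ] H2) :
    B ∘L X = lam • (X ∘L B) ↔
      ∃ φ : ℂ → ℂ, InHinf φ ∧ ∃ Φ : H2 →L[ℂ] H2, IsCoToeplitz φ Φ ∧ X = R ∘L Φ := by
  have hlam0 : lam ≠ 0 := norm_ne_zero_iff.mp (by simp [hlam])
  have hlam_inv : ‖lam⁻¹‖ ≤ 1 := by simp [hlam]
  set R' := dilation lam⁻¹ hlam_inv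
  have hR' : IsDilation lam⁻¹ R' := isDilation_dilation _ hlam_inv
  constructor
  · intro hX
    have hcomm : B ∘L (R' ∘L X) = (R' ∘L X) ∘L B := by
      rw [← ContinuousLinearMap.comp_assoc, hR'.backwardShift_comp hB,
        ContinuousLinearMap.smul_comp, ContinuousLinearMap.comp_assoc, hX,
        ContinuousLinearMap.comp_smul, smul_smul, inv_mul_cancel₀ hlam0, one_smul,
        ContinuousLinearMap.comp_assoc]
    obtain ⟨φ, hφ, hΦ⟩ := exists_isCoToeplitz_of_commute hB hcomm
    refine ⟨φ, hφ, R' ∘L X, hΦ, ?_⟩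
    rw [← ContinuousLinearMap.comp_assoc, hR.comp_inv hlam0 hR', ContinuousLinearMap.id_comp]
  · rintro ⟨φ, -, Φ, hΦ, rfl⟩
    rw [← ContinuousLinearMap.comp_assoc, hR.backwardShift_comp hB, ContinuousLinearMap.smul_comp,
      ContinuousLinearMap.comp_assoc, hΦ.backwardShift_comp hB, ContinuousLinearMap.comp_assoc]

theorem stmt0 (lam : ℂ) (hlam : ‖lam‖ = 1)
    (B R : H2 →L[ℂ] H2) (hB : IsBackwardShift B) (hR : IsDilation lam R)
    (X : H2 →L[ℂ] H2) (hX : X ≠ 0) :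
    B ∘L X = lam • (X ∘L B) ↔
      ∃ φ : ℂ → ℂ, InHinf φ ∧ ∃ Φ : H2 →L[ℂ] H2, IsCoToeplitz φ Φ ∧ X = R ∘L Φ :=
  stmt0_general lam hlam B R hB hR X
end
end

section
/- Let λ be a complex number with 0 < |λ| < 1. A nonzero bounded linear operator X on the Hardy space H²(𝔻) satisfies BX = λXB (i.e., X is an extended λ-eigenoperator of the backward shift B) if and only if there exists φ ∈ H²(𝔻), φ ≠ 0, such that the adjoint of X is X* = M_{φ̄} R_{conj(λ)}, i.e., X = R_λ φ(B) where φ(B) = (M_{φ̄})* is the (possibly unbounded) coanalytic Toeplitz operator with symbol φ. -/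
open Complex Metric Filter Topology ComplexConjugate

noncomputable section

/-!
Pass to adjoints: with `S = B*` the forward shift (multiplication by `z`) and `Y = X*`, the
relation `BX = λXB` reads `Y S = conj λ • S Y`. Hence `Y eₖ = (conj λ)ᵏ Sᵏ (Y e₀)`, and since
evaluation at a point of the disk is the inner product with a reproducing kernel, expanding `f`
in the standard basis gives `(Y f)(z) = Σ fₖ (conj λ · z)ᵏ (Y e₀)(z) = (Y e₀)(z) f(conj λ · z)`;
`φ` is the coefficientwise conjugate of `Y e₀`. Conversely, the functional identity shows that
`Y S f` and `conj λ • S Y f` take the same values on the disk, so they have the same Taylor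
coefficients.
-/

open ContinuousLinearMap

namespace H2

lemma hasSum_inner_kernelVec (f : H2) {z : ℂ} (hz : ‖z‖ < 1) :
    HasSum (fun n => f n * z ^ n) (inner ℂ (kernelVec z) f) := by
  have h := lp.hasSum_inner (𝕜 := ℂ) (kernelVec z) f
  have hterm : ∀ n, inner ℂ (kernelVec z n) (f n) = f n * z ^ n := fun n => by
    simp [kernelVec, dif_pos hz, mul_comm]
  simpa only [hterm] using h

lemma toFun_eq_inner (f : H2) {z : ℂ} (hz : ‖z‖ < 1) :
    H2.toFun f z = inner ℂ (kernelVec z) f :=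
  (hasSum_inner_kernelVec f hz).tsum_eq

lemma hasSum_toFun (f : H2) {z : ℂ} (hz : ‖z‖ < 1) :
    HasSum (fun n => f n * z ^ n) (H2.toFun f z) :=
  toFun_eq_inner f hz ▸ hasSum_inner_kernelVec f hz

lemma toFun_zero (z : ℂ) : H2.toFun 0 z = 0 := by
  simp [H2.toFun]

lemma toFun_smul (c : ℂ) (f : H2) {z : ℂ} (hz : ‖z‖ < 1) :
    H2.toFun (c • f) z = c * H2.toFun f z := by
  rw [toFun_eq_inner _ hz, toFun_eq_inner _ hz, inner_smul_right]

lemma toFun_sub (f g : H2) {z : ℂ} (hz : ‖z‖ < 1) :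
    H2.toFun (f - g) z = H2.toFun f z - H2.toFun g z := by
  rw [toFun_eq_inner _ hz, toFun_eq_inner _ hz, toFun_eq_inner _ hz, inner_sub_right]

lemma conjSymb_toFun (φ : H2) : conjSymb (H2.toFun φ) = H2.toFun (star φ) := by
  ext z
  rw [conjSymb, H2.toFun, H2.toFun, Complex.conj_tsum]
  exact tsum_congr fun n => by simp

lemma hasFPowerSeriesAt_toFun (f : H2) :
    HasFPowerSeriesAt (H2.toFun f) (FormalMultilinearSeries.ofScalars ℂ f) 0 := by
  set p := FormalMultilinearSeries.ofScalars ℂ f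
  have hradius : 1 ≤ p.radius := by
    refine ENNReal.le_of_forall_nnreal_lt fun r hr => p.le_radius_of_bound ‖f‖ fun n => ?_
    have hr1 : (r : ℝ) ≤ 1 := by exact_mod_cast hr.le
    rw [FormalMultilinearSeries.ofScalars_norm]
    calc ‖f n‖ * (r : ℝ) ^ n ≤ ‖f‖ * 1 := by
          gcongr
          · exact lp.norm_apply_le_norm two_ne_zero f n
          · exact pow_le_one₀ r.2 hr1
      _ = ‖f‖ := mul_one _
  have hsum : p.sum = H2.toFun f := by
    ext z
    exact tsum_congr fun n => by simp [p, mul_comm]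
  exact hsum ▸ (p.hasFPowerSeriesOnBall (zero_lt_one.trans_le hradius)).hasFPowerSeriesAt

lemma eq_of_toFun_eq {f g : H2}
    (h : ∀ z ∈ ball (0 : ℂ) 1, H2.toFun f z = H2.toFun g z) : f = g := by
  have hzero : H2.toFun (f - g) =ᶠ[𝓝 0] 0 := by
    filter_upwards [ball_mem_nhds (0 : ℂ) one_pos] with z hz
    rw [toFun_sub f g (mem_ball_zero_iff.mp hz), h z hz, sub_self, Pi.zero_apply]
  have hseries := (hasFPowerSeriesAt_toFun (f - g)).eq_zero_of_eventually hzero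
  rw [FormalMultilinearSeries.ofScalars_series_eq_zero] at hseries
  exact sub_eq_zero.mp (lp.ext hseries)

lemma apply_eq_inner_single (f : H2) (n : ℕ) : f n = inner ℂ (lp.single 2 n (1 : ℂ)) f := by
  rw [lp.inner_single_left, RCLike.inner_apply, map_one, mul_one]

end H2

lemma comp_eq_smul_comp_iff_adjoint {E : Type*} [NormedAddCommGroup E] [InnerProductSpace ℂ E]
    [CompleteSpace E] (c : ℂ) (A T : E →L[ℂ] E) :
    A ∘L T = c • (T ∘L A) ↔ adjoint T ∘L adjoint A = conj c • (adjoint A ∘L adjoint T) := by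
  rw [← adjoint.injective.eq_iff, adjoint_comp, map_smulₛₗ, adjoint_comp]

lemma norm_mul_lt_one_of_norm_le_one {α z : ℂ} (hα : ‖α‖ ≤ 1) (hz : ‖z‖ < 1) :
    ‖α * z‖ < 1 := by
  rw [norm_mul]
  exact mul_lt_one_of_nonneg_of_lt_one_right hα (norm_nonneg z) hz

namespace IsBackwardShift

variable {B : H2 →L[ℂ] H2} (hB : IsBackwardShift B)
include hB

lemma apply_single_zero : B (lp.single 2 0 1) = 0 := by
  ext m
  simp [hB _ m, lp.single_apply]

lemma apply_single_succ (n : ℕ) : B (lp.single 2 (n + 1) 1) = lp.single 2 n 1 := by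
  ext m
  simp [hB _ m, lp.single_apply, Pi.single_apply]

lemma adjoint_apply_zero (f : H2) : adjoint B f 0 = 0 := by
  rw [H2.apply_eq_inner_single, adjoint_inner_right, hB.apply_single_zero, inner_zero_left]

lemma adjoint_apply_succ (f : H2) (n : ℕ) : adjoint B f (n + 1) = f n := by
  rw [H2.apply_eq_inner_single, adjoint_inner_right, hB.apply_single_succ,
    ← H2.apply_eq_inner_single]

lemma adjoint_single (n : ℕ) : adjoint B (lp.single 2 n 1) = lp.single 2 (n + 1) 1 := by
  ext m
  cases m with
  | zero => simp [hB.adjoint_apply_zero, lp.single_apply]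
  | succ m => simp [hB.adjoint_apply_succ, lp.single_apply, Pi.single_apply]

lemma toFun_adjoint (f : H2) {z : ℂ} (hz : ‖z‖ < 1) :
    H2.toFun (adjoint B f) z = z * H2.toFun f z := by
  refine (H2.hasSum_toFun _ hz).unique ?_
  rw [← hasSum_nat_add_iff' 1]
  simpa [hB.adjoint_apply_zero, hB.adjoint_apply_succ, pow_succ', mul_left_comm z]
    using (H2.hasSum_toFun f hz).mul_left z

variable {α : ℂ} {Y : H2 →L[ℂ] H2}

lemma toFun_apply_single_of_comp_adjoint (hY : Y ∘L adjoint B = α • (adjoint B ∘L Y))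
    (k : ℕ) {z : ℂ} (hz : ‖z‖ < 1) :
    H2.toFun (Y (lp.single 2 k 1)) z = (α * z) ^ k * H2.toFun (Y (lp.single 2 0 1)) z := by
  induction k with
  | zero => rw [pow_zero, one_mul]
  | succ k ih =>
    have hstep : Y (lp.single 2 (k + 1) 1) = α • adjoint B (Y (lp.single 2 k 1)) := by
      rw [← hB.adjoint_single, ← comp_apply, hY, smul_apply, comp_apply]
    rw [hstep, H2.toFun_smul _ _ hz, hB.toFun_adjoint _ hz, ih]
    ring

lemma toFun_apply_of_comp_adjoint (hα : ‖α‖ ≤ 1)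
    (hY : Y ∘L adjoint B = α • (adjoint B ∘L Y)) (f : H2) {z : ℂ} (hz : ‖z‖ < 1) :
    H2.toFun (Y f) z = H2.toFun (Y (lp.single 2 0 1)) z * H2.toFun f (α * z) := by
  have hαz := norm_mul_lt_one_of_norm_le_one hα hz
  have hexpand :
      HasSum (fun k => f k * H2.toFun (Y (lp.single 2 k 1)) z) (H2.toFun (Y f) z) := by
    have h := (lp.hasSum_single ENNReal.ofNat_ne_top f).mapL ((innerSL ℂ (kernelVec z)).comp Y)
    have hsingle (k : ℕ) : (lp.single 2 k (f k) : H2) = f k • (lp.single 2 k 1 : H2) := by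
      rw [← lp.single_smul, smul_eq_mul, mul_one]
    simpa [← H2.toFun_eq_inner _ hz, hsingle, H2.toFun_smul _ _ hz] using h
  have hterm (k : ℕ) : f k * H2.toFun (Y (lp.single 2 k 1)) z
      = H2.toFun (Y (lp.single 2 0 1)) z * (f k * (α * z) ^ k) := by
    rw [hB.toFun_apply_single_of_comp_adjoint hY k hz]
    ring
  refine hexpand.unique ?_
  simpa only [hterm] using (H2.hasSum_toFun f hαz).mul_left (H2.toFun (Y (lp.single 2 0 1)) z)

lemma comp_adjoint_eq_smul_iff (hα : ‖α‖ ≤ 1) :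
    Y ∘L adjoint B = α • (adjoint B ∘L Y) ↔ ∃ d : H2, ∀ f : H2, ∀ z ∈ ball (0 : ℂ) 1,
      H2.toFun (Y f) z = H2.toFun d z * H2.toFun f (α * z) := by
  refine ⟨fun hY => ⟨_, fun f z hz =>
    hB.toFun_apply_of_comp_adjoint hα hY f (mem_ball_zero_iff.mp hz)⟩, fun ⟨d, hd⟩ => ?_⟩
  ext1 f
  refine H2.eq_of_toFun_eq fun z hz => ?_
  have hz' : ‖z‖ < 1 := mem_ball_zero_iff.mp hz
  have hαz := norm_mul_lt_one_of_norm_le_one hα hz'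
  rw [comp_apply, smul_apply, comp_apply, hd _ z hz, hB.toFun_adjoint _ hαz,
    H2.toFun_smul _ _ hz', hB.toFun_adjoint _ hz', hd f z hz]
  ring

end IsBackwardShift

theorem stmt2_general (lam : ℂ) (hlam1 : ‖lam‖ < 1)
    (B : H2 →L[ℂ] H2) (hB : IsBackwardShift B)
    (X : H2 →L[ℂ] H2) (hX : X ≠ 0) :
    B ∘L X = lam • (X ∘L B) ↔
      ∃ φ : H2, φ ≠ 0 ∧ ∀ f : H2, ∀ z ∈ ball (0:ℂ) 1,
        H2.toFun (ContinuousLinearMap.adjoint X f) z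
          = conjSymb (H2.toFun φ) z * H2.toFun f (conj lam * z) := by
  rw [comp_eq_smul_comp_iff_adjoint, hB.comp_adjoint_eq_smul_iff (by simpa using hlam1.le)]
  constructor
  · rintro ⟨d, hd⟩
    refine ⟨star d, fun hd0 => hX ?_, fun f z hz => ?_⟩
    · rw [star_eq_zero] at hd0
      suffices adjoint X = 0 by simpa using this
      ext1 f
      refine H2.eq_of_toFun_eq fun z hz => ?_
      rw [hd f z hz, hd0, zero_apply, H2.toFun_zero, zero_mul]
    · rw [H2.conjSymb_toFun, star_star, hd f z hz]
  · rintro ⟨φ, -, hφ⟩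
    exact ⟨star φ, fun f z hz => by rw [hφ f z hz, H2.conjSymb_toFun]⟩

theorem stmt2 (lam : ℂ) (hlam0 : lam ≠ 0) (hlam1 : ‖lam‖ < 1)
    (B : H2 →L[ℂ] H2) (hB : IsBackwardShift B)
    (X : H2 →L[ℂ] H2) (hX : X ≠ 0) :
    B ∘L X = lam • (X ∘L B) ↔
      ∃ φ : H2, φ ≠ 0 ∧ ∀ f : H2, ∀ z ∈ ball (0:ℂ) 1,
        H2.toFun (ContinuousLinearMap.adjoint X f) z
          = conjSymb (H2.toFun φ) z * H2.toFun f (conj lam * z) :=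
  stmt2_general lam hlam1 B hB X hX
end
end

section
/- Let λ ∈ ℂ with |λ| < 1 and let T be a nonzero bounded operator on the Hardy space H²(𝔻) satisfying BT = λTB, where B is the backward shift. Then T is not hypercyclic. -/
open Complex Metric Filter Topology ComplexConjugate

noncomputable section

theorem stmt3 (lam : ℂ) (hlam : ‖lam‖ < 1)
    (B T : H2 →L[ℂ] H2) (hB : IsBackwardShift B) (hT : T ≠ 0)
    (hcomm : B ∘L T = lam • (T ∘L B)) :
    ¬ Hypercyclic T := by
  rintro ⟨x, hx⟩
  -- pointwise form of the commutation relation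
  have hpt : ∀ g : H2, B (T g) = lam • T (B g) := by
    intro g
    have := congrArg (fun S : H2 →L[ℂ] H2 => S g) hcomm
    simpa using this
  -- B^m acts as an m-fold shift on coordinates
  have hBm : ∀ (m : ℕ) (g : H2) (k : ℕ), ((B ^ m) g) k = g (k + m) := by
    intro m
    induction m with
    | zero => intro g k; simp
    | succ m ih =>
      intro g k
      have h1 : (B ^ (m + 1)) g = (B ^ m) (B g) := by
        rw [pow_succ]; rfl
      rw [h1, ih (B g) k, hB g (k + m), add_assoc]
  -- B T^n = lam^n T^n B (pointwise)
  have lem2 : ∀ (n : ℕ) (f : H2), B ((T ^ n) f) = lam ^ n • ((T ^ n) (B f)) := by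
    intro n
    induction n with
    | zero => intro f; simp
    | succ n ih =>
      intro f
      have h1 : (T ^ (n + 1)) f = T ((T ^ n) f) := by
        rw [pow_succ']; rfl
      have h2 : (T ^ (n + 1)) (B f) = T ((T ^ n) (B f)) := by
        rw [pow_succ']; rfl
      rw [h1, hpt, ih, map_smul, h2, smul_smul, ← pow_succ']
  -- B^m T^n = lam^(n*m) T^n B^m (pointwise)
  have lem3 : ∀ (m n : ℕ) (f : H2),
      (B ^ m) ((T ^ n) f) = lam ^ (n * m) • ((T ^ n) ((B ^ m) f)) := by
    intro m
    induction m with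
    | zero => intro n f; simp
    | succ m ih =>
      intro n f
      have h1 : (B ^ (m + 1)) ((T ^ n) f) = B ((B ^ m) ((T ^ n) f)) := by
        rw [pow_succ']; rfl
      have h2 : (B ^ (m + 1)) f = B ((B ^ m) f) := by
        rw [pow_succ']; rfl
      rw [h1, ih n f, map_smul, lem2, smul_smul, ← pow_add, h2,
        show n * m + n = n * (m + 1) by ring]
  -- norm bound for powers of T
  have hTn : ∀ (n : ℕ) (g : H2), ‖(T ^ n) g‖ ≤ ‖T‖ ^ n * ‖g‖ := by
    intro n
    induction n with
    | zero =>
      intro g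
      simp only [pow_zero, ContinuousLinearMap.one_apply, one_mul]
      exact le_rfl
    | succ n ih =>
      intro g
      have h1 : (T ^ (n + 1)) g = T ((T ^ n) g) := by
        rw [pow_succ']; rfl
      calc ‖(T ^ (n + 1)) g‖ = ‖T ((T ^ n) g)‖ := by rw [h1]
        _ ≤ ‖T‖ * ‖(T ^ n) g‖ := T.le_opNorm _
        _ ≤ ‖T‖ * (‖T‖ ^ n * ‖g‖) := by
            exact mul_le_mul_of_nonneg_left (ih g) (norm_nonneg T)
        _ = ‖T‖ ^ (n + 1) * ‖g‖ := by ring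
  -- choose m with ‖lam‖^m * ‖T‖ ≤ 1
  obtain ⟨m, hm⟩ : ∃ m : ℕ, ‖lam‖ ^ m < (‖T‖ + 1)⁻¹ := by
    have h0 : Filter.Tendsto (fun m : ℕ => ‖lam‖ ^ m) atTop (nhds 0) :=
      tendsto_pow_atTop_nhds_zero_of_lt_one (norm_nonneg _) hlam
    have hpos : (0 : ℝ) < (‖T‖ + 1)⁻¹ := inv_pos.mpr (by linarith [norm_nonneg T])
    exact (h0.eventually (gt_mem_nhds hpos)).exists
  have hr : ‖lam‖ ^ m * ‖T‖ ≤ 1 := by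
    have h1 : ‖lam‖ ^ m * ‖T‖ ≤ ‖lam‖ ^ m * (‖T‖ + 1) := by
      have : (0:ℝ) ≤ ‖lam‖ ^ m := by positivity
      nlinarith
    have hTpos : (0:ℝ) < ‖T‖ + 1 := by linarith [norm_nonneg T]
    have h2 : ‖lam‖ ^ m * (‖T‖ + 1) < (‖T‖ + 1)⁻¹ * (‖T‖ + 1) :=
      mul_lt_mul_of_pos_right hm hTpos
    have h3 : (‖T‖ + 1)⁻¹ * (‖T‖ + 1) = 1 := inv_mul_cancel₀ (ne_of_gt hTpos)
    linarith
  set C : ℝ := ‖(B ^ m) x‖ with hC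
  have hC0 : 0 ≤ C := norm_nonneg _
  -- the m-th coordinate of the orbit is uniformly bounded by C
  have hbdd : ∀ n : ℕ, ‖((T ^ n) x) m‖ ≤ C := by
    intro n
    have hcoord : ((T ^ n) x) m = lam ^ (n * m) * ((T ^ n) ((B ^ m) x)) 0 := by
      have h1 : ((B ^ m) ((T ^ n) x)) 0 = ((T ^ n) x) m := by
        rw [hBm m ((T ^ n) x) 0, zero_add]
      rw [← h1, lem3 m n x]
      rw [lp.coeFn_smul, Pi.smul_apply, smul_eq_mul]
    rw [hcoord]
    calc ‖lam ^ (n * m) * ((T ^ n) ((B ^ m) x)) 0‖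
        = ‖lam‖ ^ (n * m) * ‖((T ^ n) ((B ^ m) x)) 0‖ := by
          rw [norm_mul, norm_pow]
      _ ≤ ‖lam‖ ^ (n * m) * ‖(T ^ n) ((B ^ m) x)‖ := by
          refine mul_le_mul_of_nonneg_left ?_ (by positivity)
          exact lp.norm_apply_le_norm (by norm_num) _ 0
      _ ≤ ‖lam‖ ^ (n * m) * (‖T‖ ^ n * C) := by
          exact mul_le_mul_of_nonneg_left (hTn n _) (by positivity)
      _ = (‖lam‖ ^ m * ‖T‖) ^ n * C := by
          rw [mul_pow, ← pow_mul, mul_comm m n, mul_assoc]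
      _ ≤ 1 ^ n * C := by
          refine mul_le_mul_of_nonneg_right ?_ hC0
          exact pow_le_pow_left₀ (by positivity) hr n
      _ = C := by rw [one_pow, one_mul]
  -- contradiction with density
  set y : H2 := lp.single 2 m ((C + 2 : ℝ) : ℂ) with hy
  obtain ⟨z, hz1, hz2⟩ := (Metric.dense_iff.mp hx y 1 one_pos)
  obtain ⟨n, rfl⟩ := hz2
  have hdist : ‖(T ^ n) x - y‖ < 1 := by
    have := Metric.mem_ball.mp hz1
    rwa [dist_eq_norm] at this
  have hym : (y : ∀ _ : ℕ, ℂ) m = ((C + 2 : ℝ) : ℂ) := by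
    rw [hy]
    exact lp.single_apply_self 2 m _
  have hcoordle : ‖((T ^ n) x - y) m‖ ≤ ‖(T ^ n) x - y‖ :=
    lp.norm_apply_le_norm (by norm_num) _ m
  have hsub : ((T ^ n) x - y) m = ((T ^ n) x) m - ((C + 2 : ℝ) : ℂ) := by
    rw [lp.coeFn_sub, Pi.sub_apply, hym]
  rw [hsub] at hcoordle
  have h1 : ‖((C + 2 : ℝ) : ℂ)‖ ≤ ‖((T ^ n) x) m‖ + ‖((T ^ n) x) m - ((C + 2 : ℝ) : ℂ)‖ := by
    have h2 := norm_sub_le (((T ^ n) x) m) (((T ^ n) x) m - ((C + 2 : ℝ) : ℂ))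
    have h3 : ((T ^ n) x) m - (((T ^ n) x) m - ((C + 2 : ℝ) : ℂ)) = ((C + 2 : ℝ) : ℂ) := by
      ring
    rw [h3] at h2
    linarith
  have hnormC : ‖((C + 2 : ℝ) : ℂ)‖ = C + 2 := by
    rw [Complex.norm_real]
    exact abs_of_nonneg (by linarith)
  have := hbdd n
  rw [hnormC] at h1
  linarith
end
end

section
/- Let λ ∈ ∂𝔻 be an irrational rotation, write ω = 1/conj(λ), let φ ∈ H^∞(𝔻), and let (n_k) be a fixed increasing sequence of positive integers. Let r < 1 and ε > 0 be such that φ has no zeros on the annulus C = {z : r − ε < |z| < r + ε}, and suppose such annuli can be chosen with radii r_n → 1. If for every such annulus and every z₀ with |z₀| = r the family 𝒢 = {Ω_{n_k}} is normal at z₀ and the set {Ω_{n_k}(z₀) : k ≥ 1} is bounded, then the family 𝒢 is uniformly bounded on compact subsets of 𝔻. -/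
open Complex Metric Filter Topology ComplexConjugate

noncomputable section

/-! A family that is normal in the sense of `NormalAt` (subsequences converge to finite limits)
is locally bounded: a subsequence whose suprema tend to infinity cannot have a uniformly
convergent subsequence. Fix a circle `|z| = r` beyond the compact set; compactness of the circle
turns local bounds into one bound for the whole family on it, and the maximum modulus principle
carries that bound to the disk `|z| ≤ r`. -/

theorem bddAbove_range_of_forall_subseq {s : ℕ → ℝ}
    (hs : ∀ g : ℕ → ℕ, StrictMono g →
      ∃ h : ℕ → ℕ, StrictMono h ∧ BddAbove (Set.range (s ∘ g ∘ h))) :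
    BddAbove (Set.range s) := by
  by_contra hunb
  have hfreq : ∀ m : ℕ, ∃ᶠ k in atTop, (m : ℝ) < s k := fun m => by
    by_contra hm
    exact hunb (IsBoundedUnder.bddAbove_range
      ⟨m, eventually_map.2 ((not_frequently.1 hm).mono fun _ => le_of_not_gt)⟩)
  obtain ⟨g, hg, hgs⟩ := extraction_forall_of_frequently hfreq
  obtain ⟨h, hh, hbdd⟩ := hs g hg
  have htop : Tendsto (s ∘ g) atTop atTop :=
    tendsto_atTop_mono (fun m => (hgs m).le) tendsto_natCast_atTop_atTop
  exact not_bddAbove_of_tendsto_atTop (htop.comp hh.tendsto_atTop) hbdd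

theorem NormalAt.exists_mem_nhds_bound {F : ℕ → ℂ → ℂ} {z₀ : ℂ} {V : Set ℂ}
    (hF : NormalAt F z₀) (hV : V ∈ 𝓝 z₀) (hcont : ∀ k, ContinuousOn (F k) V) :
    ∃ t ∈ 𝓝 z₀, ∃ M : ℝ, ∀ k, ∀ z ∈ t, ‖F k z‖ ≤ M := by
  obtain ⟨U, hU, hz₀U, hsubseq⟩ := hF
  obtain ⟨ρ, hρ, hL⟩ : ∃ ρ > 0, closedBall z₀ ρ ⊆ U ∩ V :=
    nhds_basis_closedBall.mem_iff.1 (inter_mem (hU.mem_nhds hz₀U) hV)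
  set L := closedBall z₀ ρ
  have hLc : IsCompact L := isCompact_closedBall z₀ ρ
  set s : ℕ → ℝ := fun k => sSup ((‖F k ·‖) '' L)
  have hle : ∀ k, ∀ z ∈ L, ‖F k z‖ ≤ s k := fun k z hz =>
    le_csSup (hLc.bddAbove_image ((hcont k).mono (hL.trans Set.inter_subset_right)).norm)
      (Set.mem_image_of_mem _ hz)
  suffices hs : BddAbove (Set.range s) by
    obtain ⟨M, hM⟩ := hs
    exact ⟨L, closedBall_mem_nhds z₀ hρ, M, fun k z hz =>
      (hle k z hz).trans (hM (Set.mem_range_self k))⟩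
  refine bddAbove_range_of_forall_subseq fun g hg => ?_
  obtain ⟨h, f, hh, hlim⟩ := hsubseq g hg
  have hunif : TendstoUniformlyOn (fun j => F (g (h j))) f atTop L :=
    (tendstoLocallyUniformlyOn_iff_forall_isCompact hU).1 hlim L
      (hL.trans Set.inter_subset_left) hLc
  have hfc : ContinuousOn f L := hunif.continuousOn <| Frequently.of_forall fun _ =>
    (hcont _).mono (hL.trans Set.inter_subset_right)
  obtain ⟨C, hC⟩ := hLc.bddAbove_image hfc.norm
  obtain ⟨N, hN⟩ := eventually_atTop.1 (Metric.tendstoUniformlyOn_iff.1 hunif 1 one_pos)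
  have hbound : ∀ j ≥ N, s (g (h j)) ≤ C + 1 := fun j hj => by
    refine csSup_le ⟨_, Set.mem_image_of_mem _ (mem_closedBall_self hρ.le)⟩ ?_
    rintro _ ⟨z, hz, rfl⟩
    calc ‖F (g (h j)) z‖ ≤ ‖f z‖ + dist (f z) (F (g (h j)) z) := by
          rw [dist_comm, dist_eq_norm]; exact norm_le_insert' _ _
      _ ≤ C + 1 := add_le_add (hC (Set.mem_image_of_mem _ hz)) (hN j hj z hz).le
  exact ⟨h, hh, IsBoundedUnder.bddAbove_range
    ⟨C + 1, eventually_map.2 (eventually_atTop.2 ⟨N, hbound⟩)⟩⟩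

theorem IsCompact.exists_bound_of_forall_mem_nhds {ι X E : Type*} [TopologicalSpace X]
    [Norm E] {F : ι → X → E} {K : Set X} (hK : IsCompact K)
    (hloc : ∀ x ∈ K, ∃ t ∈ 𝓝 x, ∃ M : ℝ, ∀ i, ∀ y ∈ t, ‖F i y‖ ≤ M) :
    ∃ M : ℝ, ∀ i, ∀ x ∈ K, ‖F i x‖ ≤ M := by
  refine hK.induction_on ⟨0, fun _ _ hx => absurd hx (Set.notMem_empty _)⟩
    (fun s t hst ⟨M, hM⟩ => ⟨M, fun i x hx => hM i x (hst hx)⟩)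
    (fun s t ⟨M, hM⟩ ⟨M', hM'⟩ => ⟨max M M', fun i x hx => ?_⟩)
    fun x hx => ?_
  · rcases hx with hx | hx
    exacts [(hM i x hx).trans (le_max_left _ _), (hM' i x hx).trans (le_max_right _ _)]
  · obtain ⟨t, ht, M, hM⟩ := hloc x hx
    exact ⟨t, mem_nhdsWithin_of_mem_nhds ht, M, hM⟩

theorem Complex.norm_le_of_forall_mem_sphere_norm_le {E : Type*} [NormedAddCommGroup E]
    [NormedSpace ℂ E] {f : ℂ → E} {U : Set ℂ} {c : ℂ} {r M : ℝ}
    (hf : DifferentiableOn ℂ f U) (hU : closedBall c r ⊆ U)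
    (hM : ∀ z ∈ sphere c r, ‖f z‖ ≤ M) {z : ℂ} (hz : z ∈ closedBall c r) : ‖f z‖ ≤ M := by
  rcases eq_or_ne r 0 with rfl | hr
  · rw [closedBall_zero] at hz
    exact hM z (by rwa [sphere_zero])
  refine Complex.norm_le_of_forall_mem_frontier_norm_le isBounded_ball
    (hf.diffContOnCl_ball hU) (fun w hw => hM w ?_) (by rwa [closure_ball c hr])
  rwa [frontier_ball c hr] at hw

theorem differentiableOn_conjSymb {φ : ℂ → ℂ} (hφ : DifferentiableOn ℂ φ (ball 0 1)) :
    DifferentiableOn ℂ (conjSymb φ) (ball 0 1) := fun z hz =>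
  (differentiableAt_conj_conj_iff.2 (hφ.differentiableAt (isOpen_ball.mem_nhds
    (by simpa using hz)))).differentiableWithinAt

theorem differentiableOn_omegaProd {φ : ℂ → ℂ} {lam : ℂ} (hlam : ‖lam‖ = 1)
    (hφ : DifferentiableOn ℂ φ (ball 0 1)) (n : ℕ) :
    DifferentiableOn ℂ (omegaProd φ lam n) (ball 0 1) := by
  refine DifferentiableOn.fun_finsetProd fun j _ =>
    (differentiableOn_conjSymb hφ).comp (differentiableOn_id.const_mul _) fun z hz => ?_
  simpa [norm_mul, norm_pow, hlam] using hz

theorem stmt12_general (lam : ℂ) (hlam : IsIrrationalRotation lam)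
    (φ : ℂ → ℂ) (hφ : InHinf φ)
    (nk : ℕ → ℕ)
    (rs : ℕ → ℝ)
    (hr1 : ∀ n, rs n < 1)
    (hto1 : Tendsto rs atTop (𝓝 1))
    (hnormal : ∀ n, ∀ z₀ : ℂ, ‖z₀‖ = rs n →
      NormalAt (fun k => omegaProd φ lam (nk k)) z₀ ∧
      ∃ M : ℝ, ∀ k, ‖omegaProd φ lam (nk k) z₀‖ ≤ M) :
    ∀ K : Set ℂ, K ⊆ ball (0:ℂ) 1 → IsCompact K →
      ∃ M : ℝ, ∀ k, ∀ z ∈ K, ‖omegaProd φ lam (nk k) z‖ ≤ M := by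
  intro K hK hKc
  obtain ⟨ρ, hρ, hKρ⟩ := exists_lt_subset_ball hKc.isClosed hK
  obtain ⟨n, hn⟩ := (hto1.eventually (eventually_gt_nhds hρ)).exists
  have hdiff : ∀ k, DifferentiableOn ℂ (omegaProd φ lam (nk k)) (ball 0 1) := fun k =>
    differentiableOn_omegaProd hlam.1 hφ.1 _
  obtain ⟨M, hM⟩ := (isCompact_sphere (0 : ℂ) (rs n)).exists_bound_of_forall_mem_nhds
    fun z hz => (hnormal n z (mem_sphere_zero_iff_norm.1 hz)).1.exists_mem_nhds_bound
      (isOpen_ball.mem_nhds (sphere_subset_ball (hr1 n) hz)) fun k => (hdiff k).continuousOn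
  exact ⟨M, fun k z hz => Complex.norm_le_of_forall_mem_sphere_norm_le (hdiff k)
    (closedBall_subset_ball (hr1 n)) (hM k) (closedBall_subset_closedBall hn.le
      (ball_subset_closedBall (hKρ hz)))⟩

theorem stmt12 (lam : ℂ) (hlam : IsIrrationalRotation lam)
    (φ : ℂ → ℂ) (hφ : InHinf φ)
    (nk : ℕ → ℕ) (hnk : StrictMono nk) (hpos : ∀ k, 0 < nk k)
    (rs εs : ℕ → ℝ)
    (hr0 : ∀ n, 0 < rs n) (hr1 : ∀ n, rs n < 1) (hε : ∀ n, 0 < εs n)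
    (hsub : ∀ n, rs n + εs n ≤ 1)
    (hnz : ∀ n, ∀ z : ℂ, rs n - εs n < ‖z‖ → ‖z‖ < rs n + εs n → φ z ≠ 0)
    (hto1 : Tendsto rs atTop (𝓝 1))
    (hnormal : ∀ n, ∀ z₀ : ℂ, ‖z₀‖ = rs n →
      NormalAt (fun k => omegaProd φ lam (nk k)) z₀ ∧
      ∃ M : ℝ, ∀ k, ‖omegaProd φ lam (nk k) z₀‖ ≤ M) :
    ∀ K : Set ℂ, K ⊆ ball (0:ℂ) 1 → IsCompact K →
      ∃ M : ℝ, ∀ k, ∀ z ∈ K, ‖omegaProd φ lam (nk k) z‖ ≤ M :=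
  stmt12_general lam hlam φ hφ nk rs hr1 hto1 hnormal
end
end

section
/- Let φ ∈ H²(𝔻) with φ(0) = 1 and let λ ∈ ℂ with |λ| < 1. Define Φ_n(z) = φ(z)·φ(λz)·⋯·φ(λ^{n−1}z). Then Φ_n ∈ H²(𝔻) for every n ≥ 1, and there exists h ∈ H²(𝔻), h ≠ 0, such that ‖Φ_n − h‖₂ → 0 as n → ∞ (moreover the infinite product ∏_{n≥1} φ(λ^{n−1}z) converges uniformly on compact subsets of 𝔻 to h). -/
open Complex Metric Filter Topology ComplexConjugate

noncomputable section

/-!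
For `‖w‖ < 1` the function `z ↦ φ(wz)` has Taylor coefficients `φₖ wᵏ` with `∑ₖ |φₖ wᵏ| < ∞`,
so multiplication by it is the bounded operator `∑ₖ φₖ wᵏ Sᵏ` on `H²` (`S` the forward shift, an
isometry), and since `φ₀ = 1` it moves `f` by at most `‖φ‖ |w| / (1 - |w|) · ‖f‖`. Hence
`Φₙ₊₁ = φ(λⁿ ·) Φₙ` differs from `Φₙ` by at most `C |λ|ⁿ ‖Φₙ‖`; summable relative increments keep
`‖Φₙ‖` bounded and make `(Φₙ)` Cauchy. The limit `h` satisfies `h(0) = 1`, and convergence in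
`H²` is locally uniform on the disk because `|f(z)| ≤ ‖f‖ / (1 - |z|)`.
-/

lemma tsum_eq_tsum_nat_add_of_eq_zero {α : Type*} [AddCommMonoid α] [TopologicalSpace α]
    {g : ℕ → α} {k : ℕ} (hg : ∀ n < k, g n = 0) : ∑' n, g n = ∑' n, g (n + k) := by
  refine ((add_left_injective k).tsum_eq fun n hn => ?_).symm
  exact ⟨n - k, Nat.sub_add_cancel (not_lt.mp fun h => hn (hg n h))⟩

section

variable {E : Type*} [SeminormedAddCommGroup E] {x : ℕ → E} {ε : ℕ → ℝ}

lemma norm_le_mul_exp_sum_of_norm_succ_sub_le (hx : ∀ n, ‖x (n + 1) - x n‖ ≤ ε n * ‖x n‖)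
    (n : ℕ) : ‖x n‖ ≤ ‖x 0‖ * Real.exp (∑ j ∈ Finset.range n, ε j) := by
  induction n with
  | zero => simp
  | succ n ih =>
    calc ‖x (n + 1)‖ ≤ ‖x n‖ + ‖x (n + 1) - x n‖ := norm_le_insert' _ _
      _ ≤ (1 + ε n) * ‖x n‖ := by linarith [hx n]
      _ ≤ Real.exp (ε n) * (‖x 0‖ * Real.exp (∑ j ∈ Finset.range n, ε j)) :=
          mul_le_mul (by linarith [Real.add_one_le_exp (ε n)]) ih (norm_nonneg _)
            (Real.exp_pos _).le
      _ = ‖x 0‖ * Real.exp (∑ j ∈ Finset.range (n + 1), ε j) := by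
          rw [Finset.sum_range_succ, Real.exp_add]; ring

lemma cauchySeq_of_norm_succ_sub_le_mul_norm (hx : ∀ n, ‖x (n + 1) - x n‖ ≤ ε n * ‖x n‖)
    (hε0 : ∀ n, 0 ≤ ε n) (hε : Summable ε) : CauchySeq x := by
  have hbound (n : ℕ) : ‖x n‖ ≤ ‖x 0‖ * Real.exp (∑' j, ε j) := by
    refine (norm_le_mul_exp_sum_of_norm_succ_sub_le hx n).trans ?_
    gcongr
    exact hε.sum_le_tsum _ fun j _ => hε0 j
  refine cauchySeq_of_dist_le_of_summable _ (fun n => ?_)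
    (hε.mul_right (‖x 0‖ * Real.exp (∑' j, ε j)))
  rw [dist_eq_norm']
  exact (hx n).trans (by gcongr; exacts [hε0 n, hbound n])

end

namespace H2

lemma norm_coeff_le (f : H2) (n : ℕ) : ‖f n‖ ≤ ‖f‖ :=
  lp.norm_apply_le_norm two_ne_zero f n

lemma toFun_zero_eq_coeff_zero (f : H2) : toFun f 0 = f 0 := by
  rw [toFun, tsum_eq_single 0 fun n hn => by rw [zero_pow hn, mul_zero], pow_zero, mul_one]

lemma norm_coeff_mul_pow_le (f : H2) (z : ℂ) (n : ℕ) : ‖f n * z ^ n‖ ≤ ‖f‖ * ‖z‖ ^ n := by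
  rw [norm_mul, norm_pow]
  gcongr
  exact norm_coeff_le f n

lemma summable_norm_coeff_mul_pow (f : H2) {z : ℂ} (hz : ‖z‖ < 1) :
    Summable fun n => ‖f n * z ^ n‖ :=
  .of_nonneg_of_le (fun _ => norm_nonneg _) (norm_coeff_mul_pow_le f z)
    ((summable_geometric_of_lt_one (norm_nonneg z) hz).mul_left _)

lemma norm_toFun_le (f : H2) {z : ℂ} (hz : ‖z‖ < 1) : ‖toFun f z‖ ≤ (1 - ‖z‖)⁻¹ * ‖f‖ := by
  have hf := summable_norm_coeff_mul_pow f hz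
  calc ‖toFun f z‖ ≤ ∑' n, ‖f n * z ^ n‖ := norm_tsum_le_tsum_norm hf
    _ ≤ ∑' n, ‖f‖ * ‖z‖ ^ n := hf.tsum_le_tsum (norm_coeff_mul_pow_le f z)
        ((summable_geometric_of_lt_one (norm_nonneg z) hz).mul_left _)
    _ = (1 - ‖z‖)⁻¹ * ‖f‖ := by
        rw [tsum_mul_left, tsum_geometric_of_lt_one (norm_nonneg z) hz, mul_comm]

def evalCLM (z : ℂ) (hz : ‖z‖ < 1) : H2 →L[ℂ] ℂ :=
  LinearMap.mkContinuous
    { toFun := fun f => toFun f z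
      map_add' := fun f g => by
        simp only [toFun, lp.coeFn_add, Pi.add_apply, add_mul]
        exact (summable_norm_coeff_mul_pow f hz).of_norm.tsum_add
          (summable_norm_coeff_mul_pow g hz).of_norm
      map_smul' := fun c f => by
        simp only [toFun, lp.coeFn_smul, Pi.smul_apply, smul_eq_mul, RingHom.id_apply,
          ← tsum_mul_left, mul_assoc] }
    (1 - ‖z‖)⁻¹ fun f => norm_toFun_le f hz

@[simp]
lemma evalCLM_apply (z : ℂ) (hz : ‖z‖ < 1) (f : H2) : evalCLM z hz f = toFun f z := rfl

lemma tendstoUniformlyOn_toFun {ι : Type*} {l : Filter ι} {F : ι → H2} {f : H2}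
    (hF : Tendsto F l (𝓝 f)) {ρ : ℝ} (hρ : ρ < 1) :
    TendstoUniformlyOn (fun i => toFun (F i)) (toFun f) l (closedBall 0 ρ) := by
  rw [Metric.tendstoUniformlyOn_iff]
  intro ε hε
  have hnorm := (tendsto_iff_norm_sub_tendsto_zero.mp hF).const_mul (1 - ρ)⁻¹
  rw [mul_zero] at hnorm
  filter_upwards [hnorm.eventually (gt_mem_nhds hε)] with i hi z hz
  rw [mem_closedBall_zero_iff] at hz
  have hz1 : ‖z‖ < 1 := hz.trans_lt hρ
  rw [dist_eq_norm', ← evalCLM_apply z hz1, ← evalCLM_apply z hz1, ← map_sub]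
  calc ‖toFun (F i - f) z‖ ≤ (1 - ‖z‖)⁻¹ * ‖F i - f‖ := norm_toFun_le _ hz1
    _ ≤ (1 - ρ)⁻¹ * ‖F i - f‖ := by gcongr
    _ < ε := hi

lemma tendstoLocallyUniformlyOn_toFun {ι : Type*} {l : Filter ι} {F : ι → H2} {f : H2}
    (hF : Tendsto F l (𝓝 f)) :
    TendstoLocallyUniformlyOn (fun i => toFun (F i)) (toFun f) l (ball 0 1) := by
  refine tendstoLocallyUniformlyOn_of_forall_exists_nhds fun z hz => ?_
  rw [mem_ball_zero_iff] at hz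
  refine ⟨closedBall 0 ((1 + ‖z‖) / 2), mem_nhdsWithin_of_mem_nhds ?_,
    tendstoUniformlyOn_toFun hF (by linarith)⟩
  exact closedBall_mem_nhds_of_mem (mem_ball_zero_iff.mpr (by linarith))

def shift (k : ℕ) (f : H2) : H2 :=
  ⟨fun n => if k ≤ n then f (n - k) else 0, by
    refine memℓp_gen ((summable_nat_add_iff k).mp ?_)
    simpa using (memℓp_gen_iff (by norm_num)).mp (lp.memℓp f)⟩

lemma shift_apply_add (k : ℕ) (f : H2) (n : ℕ) : shift k f (n + k) = f n := by
  simp [shift]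

lemma shift_apply_of_lt {k n : ℕ} (f : H2) (h : n < k) : shift k f n = 0 := by
  simp [shift, not_le.mpr h]

lemma shift_zero (f : H2) : shift 0 f = f := by
  ext n
  simp [shift]

lemma norm_shift (k : ℕ) (f : H2) : ‖shift k f‖ = ‖f‖ := by
  rw [lp.norm_eq_tsum_rpow (by norm_num), lp.norm_eq_tsum_rpow (by norm_num),
    tsum_eq_tsum_nat_add_of_eq_zero (k := k) fun n hn => by simp [shift_apply_of_lt f hn]]
  simp only [shift_apply_add]

lemma toFun_shift (k : ℕ) (f : H2) (z : ℂ) : toFun (shift k f) z = z ^ k * toFun f z := by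
  rw [toFun, tsum_eq_tsum_nat_add_of_eq_zero (k := k) fun n hn => by
    rw [shift_apply_of_lt f hn, zero_mul], toFun, ← tsum_mul_left]
  exact tsum_congr fun n => by rw [shift_apply_add, pow_add]; ring

section mulSeries

variable {b : ℕ → ℂ}

def mulSeries (b : ℕ → ℂ) (f : H2) : H2 := ∑' k, b k • shift k f

lemma summable_norm_smul_shift (hb : Summable fun k => ‖b k‖) (f : H2) :
    Summable fun k => ‖b k • shift k f‖ :=
  (hb.mul_right ‖f‖).congr fun k => by rw [norm_smul, norm_shift]

lemma toFun_mulSeries (hb : Summable fun k => ‖b k‖) (f : H2) {z : ℂ} (hz : ‖z‖ < 1) :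
    toFun (mulSeries b f) z = (∑' k, b k * z ^ k) * toFun f z := by
  rw [← evalCLM_apply z hz, mulSeries, (evalCLM z hz).map_tsum
    (summable_norm_smul_shift hb f).of_norm, ← tsum_mul_right]
  exact tsum_congr fun k => by
    rw [map_smul, smul_eq_mul, evalCLM_apply, toFun_shift, mul_assoc]

lemma norm_mulSeries_sub_self_le (hb : Summable fun k => ‖b k‖) (hb0 : b 0 = 1) (f : H2) :
    ‖mulSeries b f - f‖ ≤ (∑' k, ‖b (k + 1)‖) * ‖f‖ := by
  have htail := (summable_nat_add_iff 1).mpr (summable_norm_smul_shift hb f)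
  rw [mulSeries, (summable_norm_smul_shift hb f).of_norm.tsum_eq_zero_add, hb0, one_smul,
    shift_zero, add_sub_cancel_left, ← tsum_mul_right]
  refine (norm_tsum_le_tsum_norm htail).trans (htail.tsum_le_tsum (fun k => ?_) ?_)
  · rw [norm_smul, norm_shift]
  · exact htail.congr fun k => by rw [norm_smul, norm_shift]

end mulSeries

def dilateCoeff (f : H2) (w : ℂ) (k : ℕ) : ℂ := f k * w ^ k

lemma summable_norm_dilateCoeff (f : H2) {w : ℂ} (hw : ‖w‖ < 1) :
    Summable fun k => ‖dilateCoeff f w k‖ :=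
  summable_norm_coeff_mul_pow f hw

lemma tsum_dilateCoeff_mul_pow (f : H2) (w z : ℂ) :
    ∑' k, dilateCoeff f w k * z ^ k = toFun f (w * z) :=
  tsum_congr fun k => by rw [dilateCoeff, mul_pow, mul_assoc]

lemma tsum_norm_dilateCoeff_succ_le (f : H2) {w : ℂ} (hw : ‖w‖ < 1) :
    ∑' k, ‖dilateCoeff f w (k + 1)‖ ≤ ‖f‖ * ‖w‖ / (1 - ‖w‖) := by
  have hgeo := (summable_geometric_of_lt_one (norm_nonneg w) hw).mul_left (‖f‖ * ‖w‖)
  calc ∑' k, ‖dilateCoeff f w (k + 1)‖ ≤ ∑' k, ‖f‖ * ‖w‖ * ‖w‖ ^ k :=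
        ((summable_nat_add_iff 1).mpr (summable_norm_dilateCoeff f hw)).tsum_le_tsum
          (fun k => (norm_coeff_mul_pow_le f w (k + 1)).trans_eq (by ring)) hgeo
    _ = ‖f‖ * ‖w‖ / (1 - ‖w‖) := by
        rw [tsum_mul_left, tsum_geometric_of_lt_one (norm_nonneg w) hw, div_eq_mul_inv]

-- `φ` itself need not have summable coefficients, so it enters as the first factor; the later
-- factors `φ(λʲ ·)` do.
def dilationProd (φ : H2) (lam : ℂ) : ℕ → H2
  | 0 => lp.single 2 0 1
  | 1 => φ
  | n + 2 => mulSeries (dilateCoeff φ (lam ^ (n + 1))) (dilationProd φ lam (n + 1))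

lemma toFun_dilationProd (φ : H2) {lam : ℂ} (hlam : ‖lam‖ < 1) (n : ℕ) {z : ℂ}
    (hz : ‖z‖ < 1) :
    toFun (dilationProd φ lam n) z = ∏ j ∈ Finset.range n, toFun φ (lam ^ j * z) := by
  induction n with
  | zero =>
    rw [Finset.prod_range_zero, dilationProd, toFun, tsum_eq_single 0 fun n hn => by
      rw [lp.single_apply_ne _ _ _ hn, zero_mul]]
    simp
  | succ n ih =>
    cases n with
    | zero => simp [dilationProd]
    | succ n =>
      have hw : ‖lam ^ (n + 1)‖ < 1 := by
        rw [norm_pow]; exact pow_lt_one₀ (norm_nonneg _) hlam n.succ_ne_zero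
      rw [dilationProd, toFun_mulSeries (summable_norm_dilateCoeff φ hw) _ hz,
        tsum_dilateCoeff_mul_pow, ih, Finset.prod_range_succ _ (n + 1), mul_comm]

lemma norm_dilationProd_succ_sub_le (φ : H2) (hφ0 : φ 0 = 1) {lam : ℂ} (hlam : ‖lam‖ < 1)
    (n : ℕ) :
    ‖dilationProd φ lam (n + 2) - dilationProd φ lam (n + 1)‖ ≤
      ‖φ‖ * ‖lam‖ ^ (n + 1) / (1 - ‖lam‖) * ‖dilationProd φ lam (n + 1)‖ := by
  have hpow : ‖lam‖ ^ (n + 1) ≤ ‖lam‖ := pow_le_of_le_one (norm_nonneg _) hlam.le n.succ_ne_zero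
  have hw : ‖lam ^ (n + 1)‖ < 1 := by rw [norm_pow]; linarith
  refine (norm_mulSeries_sub_self_le (summable_norm_dilateCoeff φ hw)
    (by simp [dilateCoeff, hφ0]) _).trans ?_
  gcongr
  refine (tsum_norm_dilateCoeff_succ_le φ hw).trans ?_
  rw [norm_pow]
  gcongr

end H2

open H2 in
theorem stmt18 (φ : H2) (hφ0 : H2.toFun φ 0 = 1)
    (lam : ℂ) (hlam : ‖lam‖ < 1) :
    ∃ Φ : ℕ → H2,
      (∀ n : ℕ, ∀ z ∈ ball (0:ℂ) 1,
        H2.toFun (Φ n) z = ∏ j ∈ Finset.range n, H2.toFun φ (lam ^ j * z)) ∧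
      ∃ h : H2, h ≠ 0 ∧ Tendsto (fun n => ‖Φ n - h‖) atTop (𝓝 0) ∧
        TendstoLocallyUniformlyOn
          (fun n z => ∏ j ∈ Finset.range n, H2.toFun φ (lam ^ j * z))
          (H2.toFun h) atTop (ball (0:ℂ) 1) := by
  have hprod (n : ℕ) (z : ℂ) (hz : z ∈ ball (0:ℂ) 1) :=
    toFun_dilationProd φ hlam n (mem_ball_zero_iff.mp hz)
  have hcauchy : CauchySeq fun n => dilationProd φ lam (n + 1) :=
    cauchySeq_of_norm_succ_sub_le_mul_norm
      (norm_dilationProd_succ_sub_le φ (by rwa [← toFun_zero_eq_coeff_zero]) hlam)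
      (fun n => by positivity)
      (((summable_geometric_of_lt_one (norm_nonneg lam) hlam).mul_left
        (‖φ‖ * ‖lam‖ / (1 - ‖lam‖))).congr fun n => by ring)
  obtain ⟨h, hlim⟩ := cauchySeq_tendsto_of_complete hcauchy
  replace hlim : Tendsto (dilationProd φ lam) atTop (𝓝 h) :=
    (tendsto_add_atTop_iff_nat 1).mp hlim
  have hh0 : toFun h 0 = 1 := by
    have h0 : ‖(0 : ℂ)‖ < 1 := by simp
    refine tendsto_nhds_unique (((evalCLM 0 h0).continuous.tendsto h).comp hlim) ?_
    simp [Function.comp_def, hprod _ 0 (mem_ball_self one_pos), hφ0]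
  refine ⟨dilationProd φ lam, hprod, h, fun h_eq => by simp [h_eq, toFun] at hh0,
    tendsto_iff_norm_sub_tendsto_zero.mp hlim, ?_⟩
  exact (tendstoLocallyUniformlyOn_toFun hlim).congr fun n z hz => hprod n z hz
end
end
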